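/- arXiv:2411.09976 — 2 statements merged into one kernel-verified Lean document; each statement's English description precedes it below -/
import Mathlib

section
/- For all natural numbers n, k with 1 ≤ k ≤ n: ∑_{i=k}^{n} c(n, i) · S(i, k) · (−2)^{n−i} = (−1)^{n−k} · (2n−k−1)! / ( 2^{n−k} · (k−1)! · (n−k)! ), where the identity is understood in the rational (or real) numbers. -/
/-- Unsigned Stirling numbers of the first kind, defined by `c(0,0) = 1`,
`c(n,k) = 0` when `k > n` or (`n ≥ 1` and `k = 0`), and
`c(n+1,k) = n·c(n,k) + c(n,k-1)`. -/
def stirling1 : ℕ → ℕ → ℕ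
  | 0, 0 => 1
  | 0, _ + 1 => 0
  | _ + 1, 0 => 0
  | n + 1, k + 1 => n * stirling1 n (k + 1) + stirling1 n k

/-- Stirling numbers of the second kind, defined by `S(0,0) = 1`,
`S(n,k) = 0` when `k > n` or (`n ≥ 1` and `k = 0`), and
`S(n+1,k) = k·S(n,k) + S(n,k-1)`. -/
def stirling2 : ℕ → ℕ → ℕ
  | 0, 0 => 1
  | 0, _ + 1 => 0
  | _ + 1, 0 => 0
  | n + 1, k + 1 => (k + 1) * stirling2 n (k + 1) + stirling2 n k

lemma s1_zero {n i : ℕ} (h : n < i) : stirling1 n i = 0 := by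
  induction n generalizing i with
  | zero => obtain ⟨j, rfl⟩ : ∃ j, i = j + 1 := ⟨i - 1, by omega⟩; rfl
  | succ n ih =>
    obtain ⟨j, rfl⟩ : ∃ j, i = j + 1 := ⟨i - 1, by omega⟩
    show n * stirling1 n (j + 1) + stirling1 n j = 0
    rw [ih (by omega), ih (by omega)]; ring

lemma s2_zero {n i : ℕ} (h : n < i) : stirling2 n i = 0 := by
  induction n generalizing i with
  | zero => obtain ⟨j, rfl⟩ : ∃ j, i = j + 1 := ⟨i - 1, by omega⟩; rfl
  | succ n ih =>
    obtain ⟨j, rfl⟩ : ∃ j, i = j + 1 := ⟨i - 1, by omega⟩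
    show (j + 1) * stirling2 n (j + 1) + stirling2 n j = 0
    rw [ih (by omega), ih (by omega)]; ring

def T (n k : ℕ) : ℚ :=
  ∑ i ∈ Finset.range (n + 1),
    (stirling1 n i : ℚ) * (stirling2 i k : ℚ) * (-2 : ℚ) ^ (n - i)

lemma T_zero {n : ℕ} (h : 1 ≤ n) : T n 0 = 0 := by
  unfold T
  refine Finset.sum_eq_zero fun i _ => ?_
  match i with
  | 0 =>
    obtain ⟨m, rfl⟩ : ∃ m, n = m + 1 := ⟨n - 1, by omega⟩
    show (stirling1 (m+1) 0 : ℚ) * _ * _ = 0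
    simp [stirling1]
  | j + 1 => show _ * (stirling2 (j+1) 0 : ℚ) * _ = 0; simp [stirling2]

lemma T_high {n k : ℕ} (h : n < k) : T n k = 0 := by
  unfold T
  refine Finset.sum_eq_zero fun i hi => ?_
  rw [s2_zero (by simp at hi; omega)]; simp

lemma T_rec (n k : ℕ) :
    T (n + 1) (k + 1) = ((k : ℚ) + 1 - 2 * n) * T n (k + 1) + T n k := by
  have hsplit : T n (k + 1)
      = ∑ i ∈ Finset.range n,
          (stirling1 n (i + 1) : ℚ) * (stirling2 (i + 1) (k + 1) : ℚ)
            * (-2 : ℚ) ^ (n - (i + 1)) := by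
    unfold T
    rw [Finset.sum_range_succ']
    simp [stirling2, s2_zero]
  have key : (∑ i ∈ Finset.range (n + 1),
        (stirling1 n (i + 1) : ℚ) * (stirling2 (i + 1) (k + 1) : ℚ)
          * (-2 : ℚ) ^ (n - i))
      = -2 * T n (k + 1) := by
    rw [Finset.sum_range_succ, s1_zero (Nat.lt_succ_self n)]
    rw [hsplit, Finset.mul_sum]
    simp only [Nat.cast_zero, zero_mul, add_zero]
    refine Finset.sum_congr rfl fun i hi => ?_
    have hi' : i < n := Finset.mem_range.mp hi
    have : n - i = (n - (i + 1)) + 1 := by omega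
    rw [this, pow_succ]
    ring
  unfold T
  rw [Finset.sum_range_succ']
  have h0 : (stirling1 (n + 1) 0 : ℚ) * (stirling2 0 (k + 1) : ℚ)
      * (-2 : ℚ) ^ (n + 1 - 0) = 0 := by simp [stirling1]
  rw [h0, add_zero]
  have hterm : ∀ i ∈ Finset.range (n + 1),
      (stirling1 (n + 1) (i + 1) : ℚ) * (stirling2 (i + 1) (k + 1) : ℚ)
        * (-2 : ℚ) ^ (n + 1 - (i + 1))
      = (n : ℚ) * ((stirling1 n (i + 1) : ℚ) * (stirling2 (i + 1) (k + 1) : ℚ)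
            * (-2 : ℚ) ^ (n - i))
        + ((k : ℚ) + 1) * ((stirling1 n i : ℚ) * (stirling2 i (k + 1) : ℚ)
            * (-2 : ℚ) ^ (n - i))
        + (stirling1 n i : ℚ) * (stirling2 i k : ℚ) * (-2 : ℚ) ^ (n - i) := by
    intro i _
    have e1 : stirling1 (n + 1) (i + 1) = n * stirling1 n (i + 1) + stirling1 n i := rfl
    have e2 : stirling2 (i + 1) (k + 1) = (k + 1) * stirling2 i (k + 1) + stirling2 i k := rfl
    have e3 : n + 1 - (i + 1) = n - i := by omega
    rw [e1, e2, e3]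
    push_cast
    ring
  rw [Finset.sum_congr rfl hterm]
  rw [Finset.sum_add_distrib, Finset.sum_add_distrib, ← Finset.mul_sum, ← Finset.mul_sum, key]
  have cnk1 : T n (k + 1) = ∑ x ∈ Finset.range (n + 1),
      (stirling1 n x : ℚ) * (stirling2 x (k + 1) : ℚ) * (-2 : ℚ) ^ (n - x) := rfl
  have cnk : T n k = ∑ x ∈ Finset.range (n + 1),
      (stirling1 n x : ℚ) * (stirling2 x k : ℚ) * (-2 : ℚ) ^ (n - x) := rfl
  rw [← cnk1, ← cnk]
  ring

lemma T_diag (n : ℕ) : T n n = 1 := by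
  induction n with
  | zero => unfold T; simp [stirling1, stirling2]
  | succ n ih => rw [T_rec, T_high (Nat.lt_succ_self n), ih]; ring

lemma key (m : ℕ) : ∀ j : ℕ, T (j + 1 + m) (j + 1)
    = (-1 : ℚ) ^ m * ((j + 2 * m).factorial : ℚ)
      / ((2 : ℚ) ^ m * (j.factorial : ℚ) * (m.factorial : ℚ)) := by
  induction m with
  | zero =>
    intro j
    simp only [Nat.add_zero, Nat.mul_zero, pow_zero, one_mul, Nat.factorial_zero,
      Nat.cast_one, mul_one, T_diag]
    rw [div_self (by exact_mod_cast Nat.factorial_ne_zero j)]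
  | succ M ih =>
    intro j
    induction j with
    | zero =>
      have h : T (0 + 1 + (M + 1)) (0 + 1) = T ((M + 1) + 1) (0 + 1) := by ring_nf
      rw [h, T_rec, T_zero (by omega)]
      have := ih 0
      rw [show (0:ℕ) + 1 + M = M + 1 by ring] at this
      rw [this]
      have h2 : ((0:ℕ) + 2 * (M + 1)).factorial = (2*M+2) * ((2*M+1) * (0 + 2*M).factorial) := by
        rw [show (0:ℕ) + 2*(M+1) = (2*M+1)+1 by ring, Nat.factorial_succ,
          show (2*M:ℕ)+1 = (2*M)+1 by ring, Nat.factorial_succ]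
        ring_nf
      rw [h2]
      have hf : ((0 + 2*M).factorial : ℚ) ≠ 0 := by exact_mod_cast Nat.factorial_ne_zero _
      have hM : ((M).factorial : ℚ) ≠ 0 := by exact_mod_cast Nat.factorial_ne_zero _
      have h2p : (2:ℚ) ^ M ≠ 0 := by positivity
      rw [Nat.factorial_succ]
      push_cast
      field_simp
      ring
    | succ J ihJ =>
      have h : T (J + 1 + 1 + (M + 1)) (J + 1 + 1) = T ((J + M + 2) + 1) ((J + 1) + 1) := by
        ring_nf
      rw [h, T_rec]
      have e1 : T (J + M + 2) (J + 1 + 1) = T ((J + 1) + 1 + M) ((J + 1) + 1) := by ring_nf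
      have e2 : T (J + M + 2) (J + 1) = T (J + 1 + (M + 1)) (J + 1) := by ring_nf
      rw [e1, ih (J + 1), e2, ihJ]
      have f1 : (J + 2 * (M + 1)).factorial = (J + 1 + 2 * M + 1) * (J + 1 + 2 * M).factorial := by
        rw [show J + 2 * (M + 1) = (J + 1 + 2 * M) + 1 by ring, Nat.factorial_succ]
      have f2 : (J + 1 + 2 * (M + 1)).factorial
          = (J + 1 + 2 * M + 2) * ((J + 1 + 2 * M + 1) * (J + 1 + 2 * M).factorial) := by
        rw [show J + 1 + 2 * (M + 1) = ((J + 1 + 2 * M) + 1) + 1 by ring, Nat.factorial_succ,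
          Nat.factorial_succ]
      have f3 : (J + 1).factorial = (J + 1) * J.factorial := Nat.factorial_succ J
      have f4 : (M + 1).factorial = (M + 1) * M.factorial := Nat.factorial_succ M
      rw [f1, f2, f3, f4]
      have hf : ((J + 1 + 2*M).factorial : ℚ) ≠ 0 := by exact_mod_cast Nat.factorial_ne_zero _
      have hJ : ((J).factorial : ℚ) ≠ 0 := by exact_mod_cast Nat.factorial_ne_zero _
      have hM : ((M).factorial : ℚ) ≠ 0 := by exact_mod_cast Nat.factorial_ne_zero _
      have h2p : (2:ℚ) ^ M ≠ 0 := by positivity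
      push_cast
      field_simp
      ring

/-- Bessel-number identity (used to deduce Theorem 7 from Theorem 6):
for `1 ≤ k ≤ n`,
`∑_{i=k}^{n} c(n,i) S(i,k) (-2)^{n-i}
  = (-1)^{n-k} (2n-k-1)! / (2^{n-k} (k-1)! (n-k)!)`. -/
theorem stirling_bessel_number_identity (n k : ℕ) (hk : 1 ≤ k) (hkn : k ≤ n) :
    (∑ i ∈ Finset.Icc k n,
        (stirling1 n i : ℚ) * (stirling2 i k : ℚ) * (-2 : ℚ) ^ (n - i))
      = (-1 : ℚ) ^ (n - k) * ((2 * n - k - 1).factorial : ℚ) /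
          ((2 : ℚ) ^ (n - k) * ((k - 1).factorial : ℚ) * ((n - k).factorial : ℚ)) := by
  have hT : (∑ i ∈ Finset.Icc k n,
      (stirling1 n i : ℚ) * (stirling2 i k : ℚ) * (-2 : ℚ) ^ (n - i)) = T n k := by
    unfold T
    refine Finset.sum_subset ?_ ?_
    · intro i hi
      simp only [Finset.mem_Icc] at hi
      exact Finset.mem_range.mpr (by omega)
    · intro i hi hni
      simp only [Finset.mem_range] at hi
      simp only [Finset.mem_Icc] at hni
      rw [s2_zero (by omega)]; simp
  rw [hT]
  obtain ⟨j, m, rfl, rfl⟩ : ∃ j m, k = j + 1 ∧ n = j + 1 + m :=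
    ⟨k - 1, n - k, by omega, by omega⟩
  have b1 : 2 * (j + 1 + m) - (j + 1) - 1 = j + 2 * m := by omega
  have b2 : j + 1 + m - (j + 1) = m := by omega
  have b3 : j + 1 - 1 = j := by omega
  rw [b1, b2, b3, key m j]
end

section
/- Fix real numbers ν, β₁, β₂ and define F : ℕ×ℕ → ℝ as in the context. Then for all integers a, b ≥ 1: F(a, b) = ∑_{k=1}^{a} ( C(a,k) / C(a+b,k) ) · D_k(β₁) · F(a−k, b) + ∑_{k=1}^{b} ( C(b,k) / C(a+b,k) ) · D_k(β₂) · F(a, b−k), where D_k(β) := −(β / k!) · ∑_{j=1}^{k} c(k, j) · ν^{j}. -/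
/-- The Bessel-spider factor
`D_k(β) = -(β/k!) ∑_{j=1}^{k} c(k,j) ν^j` (eq. (25) of the paper). -/
noncomputable def besselD (ν : ℝ) (k : ℕ) (β : ℝ) : ℝ :=
  -(β / (k.factorial : ℝ)) * ∑ j ∈ Finset.Icc 1 k, (stirling1 k j : ℝ) * ν ^ j

/-- The explicit joint-moment expressions for the Bessel spider,
`F(a,b) = E₀[(A₁^{(1)})^a (A₁^{(2)})^b]` (equations (25) and (26) of the paper):
`F(0,0) = 1`; for `a ≥ 1`,
`F(a,0) = ∑_{l=1}^{a} ∑_{k=1}^{l} (-1)^{k-1} ((k-1)!/(a-1)!) c(a,l) S(l,k) ν^{l-1} β₁^k`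
(and symmetrically for `F(0,b)` with `β₂`); and for `a, b ≥ 1`,
`F(a,b) = ∑_{l₁=1}^{a} ∑_{k₁=1}^{l₁} ∑_{l₂=1}^{b} ∑_{k₂=1}^{l₂} (-1)^{k₁+k₂-1}
  ((k₁+k₂-1)!/(a+b-1)!) c(a,l₁) S(l₁,k₁) c(b,l₂) S(l₂,k₂) ν^{l₁+l₂-1} β₁^{k₁} β₂^{k₂}`. -/
noncomputable def besselF (ν β₁ β₂ : ℝ) : ℕ → ℕ → ℝ
  | 0, 0 => 1
  | a + 1, 0 =>
      ∑ l ∈ Finset.Icc 1 (a + 1), ∑ k ∈ Finset.Icc 1 l,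
        (-1 : ℝ) ^ (k - 1) * (((k - 1).factorial : ℝ) / (((a + 1) - 1).factorial : ℝ)) *
          (stirling1 (a + 1) l : ℝ) * (stirling2 l k : ℝ) * ν ^ (l - 1) * β₁ ^ k
  | 0, b + 1 =>
      ∑ l ∈ Finset.Icc 1 (b + 1), ∑ k ∈ Finset.Icc 1 l,
        (-1 : ℝ) ^ (k - 1) * (((k - 1).factorial : ℝ) / (((b + 1) - 1).factorial : ℝ)) *
          (stirling1 (b + 1) l : ℝ) * (stirling2 l k : ℝ) * ν ^ (l - 1) * β₂ ^ k
  | a + 1, b + 1 =>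
      ∑ l₁ ∈ Finset.Icc 1 (a + 1), ∑ k₁ ∈ Finset.Icc 1 l₁,
        ∑ l₂ ∈ Finset.Icc 1 (b + 1), ∑ k₂ ∈ Finset.Icc 1 l₂,
          (-1 : ℝ) ^ (k₁ + k₂ - 1) *
            (((k₁ + k₂ - 1).factorial : ℝ) / (((a + 1) + (b + 1) - 1).factorial : ℝ)) *
            (stirling1 (a + 1) l₁ : ℝ) * (stirling2 l₁ k₁ : ℝ) *
            (stirling1 (b + 1) l₂ : ℝ) * (stirling2 l₂ k₂ : ℝ) *
            ν ^ (l₁ + l₂ - 1) * β₁ ^ k₁ * β₂ ^ k₂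

lemma stirling1_zero_right : ∀ n, stirling1 n 0 = if n = 0 then 1 else 0
  | 0 => rfl
  | _+1 => rfl

lemma stirling2_zero_right : ∀ n, stirling2 n 0 = if n = 0 then 1 else 0
  | 0 => rfl
  | _+1 => rfl

lemma stirling1_eq_zero : ∀ {n k : ℕ}, n < k → stirling1 n k = 0 := by
  intro n
  induction n with
  | zero => intro k h; cases k with | zero => omega | succ k => rfl
  | succ n ih =>
    intro k h
    cases k with
    | zero => omega
    | succ k =>
      show n * stirling1 n (k+1) + stirling1 n k = 0
      rw [ih (by omega), ih (by omega)]; ring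

lemma stirling2_eq_zero : ∀ {n k : ℕ}, n < k → stirling2 n k = 0 := by
  intro n
  induction n with
  | zero => intro k h; cases k with | zero => omega | succ k => rfl
  | succ n ih =>
    intro k h
    cases k with
    | zero => omega
    | succ k =>
      show (k+1) * stirling2 n (k+1) + stirling2 n k = 0
      rw [ih (by omega), ih (by omega)]; ring

lemma sum_range_succ_eq_Icc {M : Type*} [AddCommMonoid M] (f : ℕ → M) (n : ℕ) :
    ∑ x ∈ Finset.range (n+1), f x = f 0 + ∑ x ∈ Finset.Icc 1 n, f x := by
  induction n with
  | zero => simp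
  | succ n ih =>
    rw [Finset.sum_range_succ, ih, Finset.sum_Icc_succ_top (by omega), add_assoc]

lemma sum_Icc_one_eq {M : Type*} [AddCommMonoid M] (f : ℕ → M) (n : ℕ) :
    ∑ x ∈ Finset.Icc 1 n, f x = ∑ x ∈ Finset.range n, f (x+1) := by
  induction n with
  | zero => simp
  | succ n ih => rw [Finset.sum_Icc_succ_top (by omega), ih, Finset.sum_range_succ]

noncomputable def rho (ν : ℝ) : ℕ → ℝ
  | 0 => 1
  | m+1 => (ν + m) * rho ν m

lemma sum_shift (g : ℕ → ℝ) (n : ℕ) :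
    ∑ l ∈ Finset.range (n+1), g (l+1)
      = ∑ l ∈ Finset.range (n+1), g l + g (n+1) - g 0 := by
  have h1 := Finset.sum_range_succ' g (n+1)
  have h2 := Finset.sum_range_succ g (n+1)
  rw [h2] at h1
  linarith

lemma rho_eq_sum (ν : ℝ) (k : ℕ) :
    rho ν k = ∑ j ∈ Finset.range (k+1), (stirling1 k j : ℝ) * ν ^ j := by
  induction k with
  | zero => simp [rho, stirling1]
  | succ k ih =>
    show (ν + k) * rho ν k = _
    rw [Finset.sum_range_succ', ih]
    have h0 : (stirling1 (k+1) 0 : ℝ) = 0 := by rw [stirling1_zero_right]; simp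
    rw [h0]
    have hc : ∀ j ∈ Finset.range (k+1), (stirling1 (k+1) (j+1) : ℝ) * ν ^ (j+1)
        = k * ((stirling1 k (j+1) : ℝ) * ν ^ (j+1)) + ν * ((stirling1 k j : ℝ) * ν ^ j) := by
      intro j _
      show ((k * stirling1 k (j + 1) + stirling1 k j : ℕ) : ℝ) * ν ^ (j+1) = _
      push_cast; ring
    rw [Finset.sum_congr rfl hc, Finset.sum_add_distrib, ← Finset.mul_sum, ← Finset.mul_sum,
      sum_shift (fun j => (stirling1 k j : ℝ) * ν ^ j) k]
    have hz : (stirling1 k (k+1) : ℝ) = 0 := by rw [stirling1_eq_zero (by omega)]; simp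
    have h00 : (k : ℝ) * (stirling1 k 0 : ℝ) = 0 := by
      rcases k with _ | k
      · simp
      · rw [stirling1_zero_right]; simp
    rw [hz]
    linear_combination (ν ^ 0) * h00

lemma rho_eq_sum_Icc (ν : ℝ) (k : ℕ) (hk : 1 ≤ k) :
    ∑ j ∈ Finset.Icc 1 k, (stirling1 k j : ℝ) * ν ^ j = rho ν k := by
  rw [rho_eq_sum, sum_range_succ_eq_Icc, stirling1_zero_right]
  have hk0 : k ≠ 0 := by omega
  simp [hk0]

noncomputable def PP (ν : ℝ) (a k : ℕ) : ℝ :=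
  ∑ l ∈ Finset.range (a+1), (stirling1 a l : ℝ) * (stirling2 l k : ℝ) * ν ^ l

lemma PP_zero_left (ν : ℝ) (k : ℕ) : PP ν 0 k = if k = 0 then 1 else 0 := by
  unfold PP
  cases k with
  | zero => simp [stirling1, stirling2]
  | succ k => simp [stirling1, stirling2]

lemma PP_zero_right (ν : ℝ) (a : ℕ) : PP ν a 0 = if a = 0 then 1 else 0 := by
  unfold PP
  have hc : ∀ l ∈ Finset.range (a+1), (stirling1 a l : ℝ) * (stirling2 l 0 : ℝ) * ν ^ l
      = if l = 0 then (stirling1 a 0 : ℝ) else 0 := by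
    intro l _
    rw [stirling2_zero_right]
    rcases eq_or_ne l 0 with h | h <;> simp [h]
  rw [Finset.sum_congr rfl hc, Finset.sum_ite_eq' (Finset.range (a+1)) 0]
  simp [stirling1_zero_right]

lemma PP_eq_zero (ν : ℝ) {a k : ℕ} (h : a < k) : PP ν a k = 0 := by
  unfold PP
  apply Finset.sum_eq_zero
  intro l hl
  rw [stirling2_eq_zero (by simp at hl; omega)]
  simp

lemma PP_succ (ν : ℝ) (a k : ℕ) :
    PP ν (a+1) (k+1) = (a + ν*(k+1)) * PP ν a (k+1) + ν * PP ν a k := by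
  unfold PP
  rw [Finset.sum_range_succ' (fun l => (stirling1 (a+1) l : ℝ) * (stirling2 l (k+1) : ℝ) * ν ^ l)]
  have h0 : (stirling1 (a+1) 0 : ℝ) * (stirling2 0 (k+1) : ℝ) * ν ^ 0 = 0 := by
    rw [stirling1_zero_right]; simp
  rw [h0, add_zero]
  have hstep : ∀ l ∈ Finset.range (a+1),
      (stirling1 (a+1) (l+1) : ℝ) * (stirling2 (l+1) (k+1) : ℝ) * ν ^ (l+1)
      = a * ((stirling1 a (l+1) : ℝ) * (stirling2 (l+1) (k+1) : ℝ) * ν ^ (l+1))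
        + (ν * (k+1)) * ((stirling1 a l : ℝ) * (stirling2 l (k+1) : ℝ) * ν ^ l)
        + ν * ((stirling1 a l : ℝ) * (stirling2 l k : ℝ) * ν ^ l) := by
    intro l _
    have e1 : (stirling1 (a+1) (l+1) : ℝ) = a * (stirling1 a (l+1) : ℝ) + (stirling1 a l : ℝ) := by
      show ((a * stirling1 a (l+1) + stirling1 a l : ℕ) : ℝ) = _
      push_cast; ring
    have e2 : (stirling2 (l+1) (k+1) : ℝ) = (k+1) * (stirling2 l (k+1) : ℝ) + (stirling2 l k : ℝ) := by
      show (((k+1) * stirling2 l (k+1) + stirling2 l k : ℕ) : ℝ) = _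
      push_cast; ring
    calc (stirling1 (a+1) (l+1) : ℝ) * (stirling2 (l+1) (k+1) : ℝ) * ν ^ (l+1)
        = a * ((stirling1 a (l+1) : ℝ) * (stirling2 (l+1) (k+1) : ℝ) * ν ^ (l+1))
          + (stirling1 a l : ℝ) * (stirling2 (l+1) (k+1) : ℝ) * ν ^ (l+1) := by rw [e1]; ring
      _ = _ := by rw [e2]; push_cast; ring
  rw [Finset.sum_congr rfl hstep, Finset.sum_add_distrib, Finset.sum_add_distrib,
    ← Finset.mul_sum, ← Finset.mul_sum, ← Finset.mul_sum,
    sum_shift (fun l => (stirling1 a l : ℝ) * (stirling2 l (k+1) : ℝ) * ν ^ l) a]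
  have hz1 : (stirling1 a (a+1) : ℝ) * (stirling2 (a+1) (k+1) : ℝ) * ν ^ (a+1) = 0 := by
    rw [stirling1_eq_zero (by omega)]; simp
  have hz2 : (stirling1 a 0 : ℝ) * (stirling2 0 (k+1) : ℝ) * ν ^ 0 = 0 := by
    show _ * ((0:ℕ):ℝ) * _ = 0; simp
  rw [hz1, hz2]
  ring

lemma PP_one (ν : ℝ) (a : ℕ) : PP ν (a+1) 1 = rho ν (a+1) := by
  induction a with
  | zero =>
    show PP ν 1 1 = (ν + (0:ℕ)) * rho ν 0
    simp [PP, rho, Finset.sum_range_succ, stirling1, stirling2]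
  | succ a ih =>
    have h := PP_succ ν (a+1) 0
    rw [PP_zero_right] at h
    simp only [Nat.succ_ne_zero, if_false] at h
    rw [h, ih]
    show _ = (ν + ((a+1:ℕ):ℝ)) * rho ν (a+1)
    push_cast; ring

lemma PP_conv (ν : ℝ) : ∀ a k, PP ν (a+1) (k+1)
    = ∑ m ∈ Finset.range (a+1), (a.choose m : ℝ) * rho ν (m+1) * PP ν (a-m) k := by
  intro a
  induction a with
  | zero =>
    intro k
    cases k with
    | zero =>
      rw [PP_one ν 0]
      simp [PP_zero_left, rho]
    | succ k =>
      rw [PP_eq_zero ν (by omega : 1 < k+2)]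
      simp [PP_zero_left]
  | succ a ih =>
    intro k
    have hsplit : ∑ m ∈ Finset.range (a+2), ((a+1).choose m : ℝ) * rho ν (m+1) * PP ν (a+1-m) k
        = (∑ m ∈ Finset.range (a+1), (a.choose m : ℝ) * rho ν (m+1) * PP ν (a+1-m) k)
          + ∑ m ∈ Finset.range (a+1), (a.choose m : ℝ) * rho ν (m+2) * PP ν (a-m) k := by
      rw [Finset.sum_range_succ'
        (fun m => ((a+1).choose m : ℝ) * rho ν (m+1) * PP ν (a+1-m) k) (a+1)]
      have hPascal : ∀ m ∈ Finset.range (a+1),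
          ((a+1).choose (m+1) : ℝ) * rho ν (m+1+1) * PP ν (a+1-(m+1)) k
          = (a.choose m : ℝ) * rho ν (m+2) * PP ν (a-m) k
            + (a.choose (m+1) : ℝ) * rho ν (m+2) * PP ν (a-m) k := by
        intro m _
        have hp : ((a+1).choose (m+1) : ℝ) = (a.choose m : ℝ) + (a.choose (m+1) : ℝ) := by
          rw [Nat.choose_succ_succ]; push_cast; ring
        have h2 : a+1-(m+1) = a-m := by omega
        rw [hp, h2]; ring
      rw [Finset.sum_congr rfl hPascal, Finset.sum_add_distrib]
      have hS1 : ∑ m ∈ Finset.range (a+1), (a.choose m : ℝ) * rho ν (m+1) * PP ν (a+1-m) k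
          = ∑ m ∈ Finset.range a, (a.choose (m+1) : ℝ) * rho ν (m+2) * PP ν (a-m) k
            + ((a+1).choose 0 : ℝ) * rho ν (0+1) * PP ν (a+1-0) k := by
        rw [Finset.sum_range_succ' (fun m => (a.choose m : ℝ) * rho ν (m+1) * PP ν (a+1-m) k) a]
        congr 1
        · apply Finset.sum_congr rfl
          intro m _
          have h2 : a+1-(m+1) = a-m := by omega
          rw [h2]
        · simp
      rw [hS1]
      have hlast : ∑ m ∈ Finset.range (a+1), (a.choose (m+1) : ℝ) * rho ν (m+2) * PP ν (a-m) k
          = ∑ m ∈ Finset.range a, (a.choose (m+1) : ℝ) * rho ν (m+2) * PP ν (a-m) k := by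
        rw [Finset.sum_range_succ]
        simp [Nat.choose_succ_self]
      rw [hlast]; ring
    rw [hsplit]
    cases k with
    | zero =>
      have h1 : ∑ m ∈ Finset.range (a+1), (a.choose m : ℝ) * rho ν (m+1) * PP ν (a+1-m) 0 = 0 := by
        apply Finset.sum_eq_zero
        intro m hm
        simp only [Finset.mem_range] at hm
        rw [PP_zero_right]
        have : a+1-m ≠ 0 := by omega
        simp [this]
      have h2 : ∑ m ∈ Finset.range (a+1), (a.choose m : ℝ) * rho ν (m+2) * PP ν (a-m) 0
          = rho ν (a+2) := by
        rw [Finset.sum_eq_single a]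
        · rw [PP_zero_right]; simp
        · intro m hm hne
          simp only [Finset.mem_range] at hm
          rw [PP_zero_right]
          have : a - m ≠ 0 := by omega
          simp [this]
        · intro h; exact absurd (Finset.self_mem_range_succ a) h
      rw [h1, h2, PP_one]
      ring
    | succ k' =>
      have hcomb : (∑ m ∈ Finset.range (a+1), (a.choose m : ℝ) * rho ν (m+1) * PP ν (a+1-m) (k'+1))
            + ∑ m ∈ Finset.range (a+1), (a.choose m : ℝ) * rho ν (m+2) * PP ν (a-m) (k'+1)
          = ((a:ℝ)+1+ν*((k':ℝ)+1+1))
              * (∑ m ∈ Finset.range (a+1), (a.choose m : ℝ) * rho ν (m+1) * PP ν (a-m) (k'+1))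
            + ν * ∑ m ∈ Finset.range (a+1), (a.choose m : ℝ) * rho ν (m+1) * PP ν (a-m) k' := by
        rw [Finset.mul_sum, Finset.mul_sum, ← Finset.sum_add_distrib, ← Finset.sum_add_distrib]
        apply Finset.sum_congr rfl
        intro m hm
        simp only [Finset.mem_range] at hm
        have hm' : m ≤ a := by omega
        have hsub : a+1-m = (a-m)+1 := by omega
        rw [hsub, PP_succ]
        have hcast : ((a-m : ℕ) : ℝ) = (a:ℝ) - (m:ℝ) := by
          rw [Nat.cast_sub hm']
        have hrho : rho ν (m+2) = (ν + ((m+1:ℕ):ℝ)) * rho ν (m+1) := rfl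
        rw [hcast, hrho]
        push_cast
        ring
      rw [hcomb, ← ih (k'+1), ← ih k', PP_succ ν (a+1) (k'+1)]
      push_cast
      ring

lemma PP_W (ν : ℝ) (b j : ℕ) :
    ∑ m ∈ Finset.range b, ((m:ℝ)+1) * ((b.choose (m+1) : ℝ) * rho ν (m+1) * PP ν (b-(m+1)) j)
      = (b:ℝ) * PP ν b (j+1) := by
  cases b with
  | zero => simp [PP_zero_left]
  | succ c =>
    have hterm : ∀ m ∈ Finset.range (c+1),
        ((m:ℝ)+1) * (((c+1).choose (m+1) : ℝ) * rho ν (m+1) * PP ν (c+1-(m+1)) j)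
        = ((c:ℝ)+1) * ((c.choose m : ℝ) * rho ν (m+1) * PP ν (c-m) j) := by
      intro m _
      have h := Nat.add_one_mul_choose_eq c m
      have h' : ((c+1) * c.choose m : ℝ) = ((c+1).choose (m+1) * (m+1) : ℝ) := by
        exact_mod_cast congrArg (Nat.cast : ℕ → ℝ) h
      have h2 : c+1-(m+1) = c-m := by omega
      rw [h2]
      push_cast at h' ⊢
      linear_combination (- rho ν (m+1) * PP ν (c-m) j) * h'
    rw [Finset.sum_congr rfl hterm, ← Finset.mul_sum, ← PP_conv]
    push_cast; ring

lemma PP_LC_aux (ν : ℝ) (b : ℕ)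
    (hD : ∀ j, ∑ m ∈ Finset.range b, (b.choose (m+1) : ℝ) * rho ν (m+1) * PP ν (b-(m+1)) j
      = ((j:ℝ)+1) * PP ν b (j+1)) :
    ∀ j, ∑ m ∈ Finset.range b, (b.choose (m+1) : ℝ) * rho ν (m+1) * PP ν (b-m) j
      = (j:ℝ) * PP ν (b+1) (j+1) := by
  intro j
  cases j with
  | zero =>
    rw [Finset.sum_eq_zero]
    · simp
    · intro m hm
      simp only [Finset.mem_range] at hm
      rw [PP_zero_right]
      have : b - m ≠ 0 := by omega
      simp [this]
  | succ j' =>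
    have hterm : ∀ m ∈ Finset.range b,
        (b.choose (m+1) : ℝ) * rho ν (m+1) * PP ν (b-m) (j'+1)
        = ((b:ℝ) + ν*((j':ℝ)+1)) * ((b.choose (m+1) : ℝ) * rho ν (m+1) * PP ν (b-(m+1)) (j'+1))
          - ((m:ℝ)+1) * ((b.choose (m+1) : ℝ) * rho ν (m+1) * PP ν (b-(m+1)) (j'+1))
          + ν * ((b.choose (m+1) : ℝ) * rho ν (m+1) * PP ν (b-(m+1)) j') := by
      intro m hm
      simp only [Finset.mem_range] at hm
      have hsub : b - m = (b-(m+1))+1 := by omega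
      rw [hsub, PP_succ]
      have hcast : ((b-(m+1) : ℕ) : ℝ) = (b:ℝ) - ((m:ℝ)+1) := by
        rw [Nat.cast_sub (by omega : m+1 ≤ b)]; push_cast; ring
      rw [hcast]
      push_cast; ring
    rw [Finset.sum_congr rfl hterm, Finset.sum_add_distrib, Finset.sum_sub_distrib,
      ← Finset.mul_sum, ← Finset.mul_sum, hD (j'+1), hD j', PP_W, PP_succ ν b (j'+1)]
    push_cast; ring

lemma PP_D_range (ν : ℝ) : ∀ b j, ∑ m ∈ Finset.range b,
      (b.choose (m+1) : ℝ) * rho ν (m+1) * PP ν (b-(m+1)) j = ((j:ℝ)+1) * PP ν b (j+1) := by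
  intro b
  induction b with
  | zero =>
    intro j
    rw [PP_eq_zero ν (by omega : 0 < j+1)]
    simp
  | succ b ih =>
    intro j
    have hterm : ∀ m ∈ Finset.range (b+1),
        ((b+1).choose (m+1) : ℝ) * rho ν (m+1) * PP ν (b+1-(m+1)) j
        = (b.choose m : ℝ) * rho ν (m+1) * PP ν (b-m) j
          + (b.choose (m+1) : ℝ) * rho ν (m+1) * PP ν (b-m) j := by
      intro m _
      have hp : ((b+1).choose (m+1) : ℝ) = (b.choose m : ℝ) + (b.choose (m+1) : ℝ) := by
        rw [Nat.choose_succ_succ]; push_cast; ring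
      have h2 : b+1-(m+1) = b-m := by omega
      rw [hp, h2]; ring
    rw [Finset.sum_congr rfl hterm, Finset.sum_add_distrib]
    have hdrop : ∑ m ∈ Finset.range (b+1), (b.choose (m+1) : ℝ) * rho ν (m+1) * PP ν (b-m) j
        = ∑ m ∈ Finset.range b, (b.choose (m+1) : ℝ) * rho ν (m+1) * PP ν (b-m) j := by
      rw [Finset.sum_range_succ]
      simp [Nat.choose_succ_self]
    rw [hdrop, ← PP_conv, PP_LC_aux ν b ih j, PP_succ ν b j]
    push_cast; ring

lemma PP_D_Icc (ν : ℝ) (b j : ℕ) :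
    ∑ k ∈ Finset.Icc 1 b, (b.choose k : ℝ) * rho ν k * PP ν (b-k) j
      = ((j:ℝ)+1) * PP ν b (j+1) := by
  rw [sum_Icc_one_eq]
  exact PP_D_range ν b j

lemma PP_LC_Icc (ν : ℝ) (a j : ℕ) :
    ∑ k ∈ Finset.Icc 1 a, (a.choose k : ℝ) * rho ν k * PP ν (a+1-k) j
      = (j:ℝ) * PP ν (a+1) (j+1) := by
  rw [sum_Icc_one_eq]
  have hc : ∀ m ∈ Finset.range a,
      (a.choose (m+1) : ℝ) * rho ν (m+1) * PP ν (a+1-(m+1)) j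
      = (a.choose (m+1) : ℝ) * rho ν (m+1) * PP ν (a-m) j := by
    intro m _
    have h2 : a+1-(m+1) = a-m := by omega
    rw [h2]
  rw [Finset.sum_congr rfl hc]
  exact PP_LC_aux ν a (PP_D_range ν a) j

noncomputable def Lam (β₁ β₂ : ℝ) (k₁ k₂ : ℕ) : ℝ :=
  if k₁ = 0 ∧ k₂ = 0 then 0
  else (-1:ℝ)^(k₁+k₂-1) * ((k₁+k₂-1).factorial : ℝ) * β₁^k₁ * β₂^k₂

lemma Lam_symm (β₁ β₂ : ℝ) (k₁ k₂ : ℕ) : Lam β₁ β₂ k₁ k₂ = Lam β₂ β₁ k₂ k₁ := by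
  unfold Lam
  by_cases h : k₁ = 0 ∧ k₂ = 0
  · simp [h.1, h.2]
  · have h' : ¬(k₂ = 0 ∧ k₁ = 0) := fun hh => h ⟨hh.2, hh.1⟩
    rw [if_neg h, if_neg h', Nat.add_comm k₂ k₁]
    ring

lemma Lam_E (β₁ β₂ : ℝ) (j k : ℕ) :
    Lam β₁ β₂ (j+1) k + β₁ * j * Lam β₁ β₂ j k + β₂ * k * Lam β₁ β₂ (j+1) (k-1)
      = if j = 0 ∧ k = 0 then β₁ else 0 := by
  match j, k with
  | 0, 0 => simp [Lam]
  | 0, 1 => norm_num [Lam]; ring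
  | 0, k+2 =>
    simp only [Lam]
    norm_num
    have f1 : (((k+2).factorial : ℕ) : ℝ) = ((k:ℝ)+2) * ((k+1).factorial : ℕ) := by
      rw [show k+2 = (k+1)+1 from rfl, Nat.factorial_succ]
      push_cast; ring
    have p1 : (-1:ℝ)^(k+2) = (-1:ℝ)^(k+1) * (-1) := by
      rw [show k+2 = (k+1)+1 from rfl, pow_succ]
    rw [f1, p1]
    ring
  | j+1, 0 =>
    simp only [Lam]
    norm_num
    rw [Nat.factorial_succ j, pow_succ]
    push_cast
    ring
  | j+1, k+1 =>
    simp only [Lam]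
    norm_num
    have f1 : (((j+1+1+k).factorial : ℕ) : ℝ) = ((j:ℝ)+k+2) * ((j+1+k).factorial : ℕ) := by
      rw [show j+1+1+k = (j+1+k)+1 from by omega, Nat.factorial_succ]
      push_cast; ring
    have p1 : (-1:ℝ)^(j+1+1+k) = (-1:ℝ)^(j+1+k) * (-1) := by
      rw [show j+1+1+k = (j+1+k)+1 from by omega, pow_succ]
    rw [f1, p1]
    push_cast
    ring

noncomputable def GG (ν β₁ β₂ : ℝ) (a b : ℕ) : ℝ :=
  ∑ k₁ ∈ Finset.range (a+1), ∑ k₂ ∈ Finset.range (b+1),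
    PP ν a k₁ * PP ν b k₂ * Lam β₁ β₂ k₁ k₂

lemma GG_symm (ν β₁ β₂ : ℝ) (a b : ℕ) : GG ν β₁ β₂ a b = GG ν β₂ β₁ b a := by
  unfold GG
  rw [Finset.sum_comm]
  apply Finset.sum_congr rfl
  intro k₂ _
  apply Finset.sum_congr rfl
  intro k₁ _
  rw [Lam_symm]
  ring

lemma GG_ext (ν β₁ β₂ : ℝ) {n N : ℕ} (h : n ≤ N) (b : ℕ) :
    GG ν β₁ β₂ n b = ∑ k₁ ∈ Finset.range (N+1), ∑ k₂ ∈ Finset.range (b+1),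
      PP ν n k₁ * PP ν b k₂ * Lam β₁ β₂ k₁ k₂ := by
  unfold GG
  apply Finset.sum_subset
  · intro x hx
    simp only [Finset.mem_range] at *
    omega
  · intro x _ hnx
    simp only [Finset.mem_range, not_lt] at hnx
    apply Finset.sum_eq_zero
    intro k₂ _
    rw [PP_eq_zero ν (by omega : n < x)]
    ring

lemma GG_ext2 (ν β₁ β₂ : ℝ) (a : ℕ) {n N : ℕ} (h : n ≤ N) :
    GG ν β₁ β₂ a n = ∑ k₁ ∈ Finset.range (a+1), ∑ k₂ ∈ Finset.range (N+1),
      PP ν a k₁ * PP ν n k₂ * Lam β₁ β₂ k₁ k₂ := by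
  unfold GG
  apply Finset.sum_congr rfl
  intro k₁ _
  apply Finset.sum_subset
  · intro x hx
    simp only [Finset.mem_range] at *
    omega
  · intro x _ hnx
    simp only [Finset.mem_range, not_lt] at hnx
    rw [PP_eq_zero ν (by omega : n < x)]
    ring

lemma sum_reindex_one (f : ℕ → ℝ) (n : ℕ) (h0 : f 0 = 0) (htop : f (n+2) = 0) :
    ∑ k ∈ Finset.range (n+2), f k = ∑ j ∈ Finset.range (n+2), f (j+1) := by
  rw [Finset.sum_range_succ' f (n+1), Finset.sum_range_succ (fun j => f (j+1)) (n+1), h0, htop]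

lemma RR (ν β₁ β₂ : ℝ) (a b : ℕ) :
    GG ν β₁ β₂ (a+1) (b+1)
      + β₁ * ∑ k ∈ Finset.Icc 1 a, ((a.choose k : ℝ) * rho ν k * GG ν β₁ β₂ (a+1-k) (b+1))
      + β₂ * ∑ k ∈ Finset.Icc 1 (b+1),
          (((b+1).choose k : ℝ) * rho ν k * GG ν β₁ β₂ (a+1) (b+1-k))
      = 0 := by
  have hT2 : ∑ k ∈ Finset.Icc 1 a, ((a.choose k : ℝ) * rho ν k * GG ν β₁ β₂ (a+1-k) (b+1))
      = ∑ j ∈ Finset.range (a+2), ∑ k₂ ∈ Finset.range (b+2),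
          ((j:ℝ) * PP ν (a+1) (j+1)) * (PP ν (b+1) k₂ * Lam β₁ β₂ j k₂) := by
    have h1 : ∀ kk ∈ Finset.Icc 1 a, (a.choose kk : ℝ) * rho ν kk * GG ν β₁ β₂ (a+1-kk) (b+1)
        = ∑ j ∈ Finset.range (a+2), ∑ k₂ ∈ Finset.range (b+2),
            ((a.choose kk : ℝ) * rho ν kk * PP ν (a+1-kk) j)
              * (PP ν (b+1) k₂ * Lam β₁ β₂ j k₂) := by
      intro kk _
      rw [GG_ext ν β₁ β₂ (show a+1-kk ≤ a+1 by omega) (b+1), Finset.mul_sum]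
      apply Finset.sum_congr rfl; intro j _
      rw [Finset.mul_sum]
      apply Finset.sum_congr rfl; intro k₂ _
      ring
    rw [Finset.sum_congr rfl h1, Finset.sum_comm]
    apply Finset.sum_congr rfl; intro j _
    rw [Finset.sum_comm]
    apply Finset.sum_congr rfl; intro k₂ _
    rw [← Finset.sum_mul, PP_LC_Icc]
  have hT3 : ∑ k ∈ Finset.Icc 1 (b+1),
        (((b+1).choose k : ℝ) * rho ν k * GG ν β₁ β₂ (a+1) (b+1-k))
      = ∑ k₁ ∈ Finset.range (a+2), ∑ k₂ ∈ Finset.range (b+2),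
          PP ν (a+1) k₁ * ((((k₂:ℝ)+1) * PP ν (b+1) (k₂+1)) * Lam β₁ β₂ k₁ k₂) := by
    have h1 : ∀ kk ∈ Finset.Icc 1 (b+1),
        ((b+1).choose kk : ℝ) * rho ν kk * GG ν β₁ β₂ (a+1) (b+1-kk)
        = ∑ k₁ ∈ Finset.range (a+2), ∑ k₂ ∈ Finset.range (b+2),
            PP ν (a+1) k₁ * ((((b+1).choose kk : ℝ) * rho ν kk * PP ν (b+1-kk) k₂)
              * Lam β₁ β₂ k₁ k₂) := by
      intro kk _
      rw [GG_ext2 ν β₁ β₂ (a+1) (show b+1-kk ≤ b+1 by omega), Finset.mul_sum]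
      apply Finset.sum_congr rfl; intro k₁ _
      rw [Finset.mul_sum]
      apply Finset.sum_congr rfl; intro k₂ _
      ring
    rw [Finset.sum_congr rfl h1, Finset.sum_comm]
    apply Finset.sum_congr rfl; intro k₁ _
    rw [Finset.sum_comm]
    apply Finset.sum_congr rfl; intro k₂ _
    rw [← Finset.mul_sum]
    congr 1
    rw [← Finset.sum_mul, PP_D_Icc]
  have hC1 : GG ν β₁ β₂ (a+1) (b+1)
      = ∑ j ∈ Finset.range (a+2), ∑ k ∈ Finset.range (b+2),
          PP ν (a+1) (j+1) * PP ν (b+1) k * Lam β₁ β₂ (j+1) k := by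
    show ∑ k₁ ∈ Finset.range (a+2), ∑ k₂ ∈ Finset.range (b+2),
        PP ν (a+1) k₁ * PP ν (b+1) k₂ * Lam β₁ β₂ k₁ k₂ = _
    rw [sum_reindex_one (fun k₁ => ∑ k₂ ∈ Finset.range (b+2),
        PP ν (a+1) k₁ * PP ν (b+1) k₂ * Lam β₁ β₂ k₁ k₂) a]
    · apply Finset.sum_eq_zero; intro k₂ _
      rw [PP_zero_right]; simp
    · apply Finset.sum_eq_zero; intro k₂ _
      rw [PP_eq_zero ν (by omega : a+1 < a+2)]; ring
  have hC3 : ∑ k₁ ∈ Finset.range (a+2), ∑ k₂ ∈ Finset.range (b+2),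
        PP ν (a+1) k₁ * ((((k₂:ℝ)+1) * PP ν (b+1) (k₂+1)) * Lam β₁ β₂ k₁ k₂)
      = ∑ j ∈ Finset.range (a+2), ∑ k ∈ Finset.range (b+2),
          PP ν (a+1) (j+1) * (((k:ℝ) * PP ν (b+1) k) * Lam β₁ β₂ (j+1) (k-1)) := by
    rw [sum_reindex_one (fun k₁ => ∑ k₂ ∈ Finset.range (b+2),
        PP ν (a+1) k₁ * ((((k₂:ℝ)+1) * PP ν (b+1) (k₂+1)) * Lam β₁ β₂ k₁ k₂)) a]
    · apply Finset.sum_congr rfl; intro j _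
      have hinner : ∑ k ∈ Finset.range (b+2),
          PP ν (a+1) (j+1) * (((k:ℝ) * PP ν (b+1) k) * Lam β₁ β₂ (j+1) (k-1))
          = ∑ k₂ ∈ Finset.range (b+2),
            PP ν (a+1) (j+1) * ((((k₂+1 : ℕ):ℝ) * PP ν (b+1) (k₂+1)) * Lam β₁ β₂ (j+1) ((k₂+1)-1)) := by
        apply sum_reindex_one (fun k => PP ν (a+1) (j+1)
          * (((k:ℝ) * PP ν (b+1) k) * Lam β₁ β₂ (j+1) (k-1))) b
        · push_cast; ring
        · rw [PP_eq_zero ν (by omega : b+1 < b+2)]; ring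
      rw [hinner]
      apply Finset.sum_congr rfl; intro k₂ _
      push_cast
      norm_num
    · apply Finset.sum_eq_zero; intro k₂ _
      rw [PP_zero_right]; simp
    · apply Finset.sum_eq_zero; intro k₂ _
      rw [PP_eq_zero ν (by omega : a+1 < a+2)]; ring
  rw [hT2, hT3, hC1, hC3, Finset.mul_sum, Finset.mul_sum]
  rw [← Finset.sum_add_distrib, ← Finset.sum_add_distrib]
  apply Finset.sum_eq_zero
  intro j hj
  rw [Finset.mul_sum, Finset.mul_sum, ← Finset.sum_add_distrib, ← Finset.sum_add_distrib]
  apply Finset.sum_eq_zero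
  intro k hk
  have hE := Lam_E β₁ β₂ j k
  have hgoal : PP ν (a+1) (j+1) * PP ν (b+1) k * Lam β₁ β₂ (j+1) k
      + β₁ * (((j:ℝ) * PP ν (a+1) (j+1)) * (PP ν (b+1) k * Lam β₁ β₂ j k))
      + β₂ * (PP ν (a+1) (j+1) * (((k:ℝ) * PP ν (b+1) k) * Lam β₁ β₂ (j+1) (k-1)))
      = PP ν (a+1) (j+1) * PP ν (b+1) k
        * (Lam β₁ β₂ (j+1) k + β₁ * j * Lam β₁ β₂ j k + β₂ * k * Lam β₁ β₂ (j+1) (k-1)) := by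
    ring
  rw [hgoal, hE]
  by_cases h : j = 0 ∧ k = 0
  · rw [if_pos h, h.2, PP_zero_right]
    simp
  · rw [if_neg h]
    ring

lemma sum_Icc_ext (n : ℕ) (f : ℕ → ℕ → ℝ)
    (h0 : ∀ k, f 0 k = 0)
    (hk0 : ∀ l, 1 ≤ l → f l 0 = 0)
    (hlt : ∀ l k, 1 ≤ l → l < k → f l k = 0) :
    ∑ l ∈ Finset.Icc 1 n, ∑ k ∈ Finset.Icc 1 l, f l k
      = ∑ l ∈ Finset.range (n+1), ∑ k ∈ Finset.range (n+1), f l k := by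
  rw [sum_range_succ_eq_Icc (fun l => ∑ k ∈ Finset.range (n+1), f l k) n]
  have hz : ∑ k ∈ Finset.range (n+1), f 0 k = 0 := Finset.sum_eq_zero (fun k _ => h0 k)
  rw [hz, zero_add]
  apply Finset.sum_congr rfl
  intro l hl
  simp only [Finset.mem_Icc] at hl
  apply Finset.sum_subset
  · intro x hx
    simp only [Finset.mem_Icc, Finset.mem_range] at *
    omega
  · intro x _ hnx
    simp only [Finset.mem_Icc, not_and, not_le] at hnx
    rcases Nat.eq_zero_or_pos x with h | h
    · subst h; exact hk0 l hl.1
    · exact hlt l x hl.1 (by omega)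

lemma GG_box (ν β₁ β₂ : ℝ) (a b : ℕ) :
    GG ν β₁ β₂ a b = ∑ l₁ ∈ Finset.range (a+1), ∑ k₁ ∈ Finset.range (a+1),
      ((stirling1 a l₁ : ℝ) * (stirling2 l₁ k₁ : ℝ) * ν ^ l₁)
        * ∑ l₂ ∈ Finset.range (b+1), ∑ k₂ ∈ Finset.range (b+1),
            ((stirling1 b l₂ : ℝ) * (stirling2 l₂ k₂ : ℝ) * ν ^ l₂) * Lam β₁ β₂ k₁ k₂ := by
  unfold GG
  have step1 : ∀ k₁ ∈ Finset.range (a+1),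
      ∑ k₂ ∈ Finset.range (b+1), PP ν a k₁ * PP ν b k₂ * Lam β₁ β₂ k₁ k₂
      = PP ν a k₁ * ∑ k₂ ∈ Finset.range (b+1), PP ν b k₂ * Lam β₁ β₂ k₁ k₂ := by
    intro k₁ _
    rw [Finset.mul_sum]
    apply Finset.sum_congr rfl
    intro k₂ _
    ring
  rw [Finset.sum_congr rfl step1]
  have step2 : ∀ k₁ ∈ Finset.range (a+1),
      PP ν a k₁ * ∑ k₂ ∈ Finset.range (b+1), PP ν b k₂ * Lam β₁ β₂ k₁ k₂
      = ∑ l₁ ∈ Finset.range (a+1), ((stirling1 a l₁ : ℝ) * (stirling2 l₁ k₁ : ℝ) * ν ^ l₁)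
          * ∑ k₂ ∈ Finset.range (b+1), PP ν b k₂ * Lam β₁ β₂ k₁ k₂ := by
    intro k₁ _
    rw [← Finset.sum_mul]
    rfl
  rw [Finset.sum_congr rfl step2, Finset.sum_comm]
  apply Finset.sum_congr rfl
  intro l₁ _
  apply Finset.sum_congr rfl
  intro k₁ _
  congr 1
  have step3 : ∀ k₂ ∈ Finset.range (b+1),
      PP ν b k₂ * Lam β₁ β₂ k₁ k₂
      = ∑ l₂ ∈ Finset.range (b+1), ((stirling1 b l₂ : ℝ) * (stirling2 l₂ k₂ : ℝ) * ν ^ l₂)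
          * Lam β₁ β₂ k₁ k₂ := by
    intro k₂ _
    rw [← Finset.sum_mul]
    rfl
  rw [Finset.sum_congr rfl step3, Finset.sum_comm]

lemma GG_Icc (ν β₁ β₂ : ℝ) (a b : ℕ) :
    GG ν β₁ β₂ (a+1) (b+1)
      = ∑ l₁ ∈ Finset.Icc 1 (a+1), ∑ k₁ ∈ Finset.Icc 1 l₁,
          ∑ l₂ ∈ Finset.Icc 1 (b+1), ∑ k₂ ∈ Finset.Icc 1 l₂,
            ((stirling1 (a+1) l₁ : ℝ) * (stirling2 l₁ k₁ : ℝ) * ν ^ l₁)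
              * (((stirling1 (b+1) l₂ : ℝ) * (stirling2 l₂ k₂ : ℝ) * ν ^ l₂)
                  * Lam β₁ β₂ k₁ k₂) := by
  rw [GG_box]
  symm
  have e1 := sum_Icc_ext (a+1) (fun l₁ k₁ =>
      ∑ l₂ ∈ Finset.Icc 1 (b+1), ∑ k₂ ∈ Finset.Icc 1 l₂,
        ((stirling1 (a+1) l₁ : ℝ) * (stirling2 l₁ k₁ : ℝ) * ν ^ l₁)
          * (((stirling1 (b+1) l₂ : ℝ) * (stirling2 l₂ k₂ : ℝ) * ν ^ l₂)
              * Lam β₁ β₂ k₁ k₂))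
    (by
      intro k₁
      apply Finset.sum_eq_zero; intro l₂ _
      apply Finset.sum_eq_zero; intro k₂ _
      rw [stirling1_zero_right]
      simp)
    (by
      intro l₁ hl₁
      apply Finset.sum_eq_zero; intro l₂ _
      apply Finset.sum_eq_zero; intro k₂ _
      rw [stirling2_zero_right]
      have : l₁ ≠ 0 := by omega
      simp [this])
    (by
      intro l₁ k₁ _ hlt
      apply Finset.sum_eq_zero; intro l₂ _
      apply Finset.sum_eq_zero; intro k₂ _
      rw [stirling2_eq_zero hlt]
      simp)
  rw [e1]
  apply Finset.sum_congr rfl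
  intro l₁ _
  apply Finset.sum_congr rfl
  intro k₁ _
  have e2 := sum_Icc_ext (b+1) (fun l₂ k₂ =>
      ((stirling1 (a+1) l₁ : ℝ) * (stirling2 l₁ k₁ : ℝ) * ν ^ l₁)
        * (((stirling1 (b+1) l₂ : ℝ) * (stirling2 l₂ k₂ : ℝ) * ν ^ l₂)
            * Lam β₁ β₂ k₁ k₂))
    (by
      intro k₂
      simp [stirling1_zero_right])
    (by
      intro l₂ hl₂
      have : l₂ ≠ 0 := by omega
      simp [stirling2_zero_right, this])
    (by
      intro l₂ k₂ _ hlt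
      simp [stirling2_eq_zero hlt])
  refine Eq.trans e2 ?_
  rw [Finset.mul_sum]
  apply Finset.sum_congr rfl
  intro l₂ _
  exact (Finset.mul_sum _ _ _).symm

lemma GG_eq_F11 (ν β₁ β₂ : ℝ) (a b : ℕ) :
    GG ν β₁ β₂ (a+1) (b+1)
      = ν * (((a+b+1).factorial : ℝ)) * besselF ν β₁ β₂ (a+1) (b+1) := by
  have hunf : besselF ν β₁ β₂ (a+1) (b+1)
      = ∑ l₁ ∈ Finset.Icc 1 (a + 1), ∑ k₁ ∈ Finset.Icc 1 l₁,
          ∑ l₂ ∈ Finset.Icc 1 (b + 1), ∑ k₂ ∈ Finset.Icc 1 l₂,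
            (-1 : ℝ) ^ (k₁ + k₂ - 1) *
              (((k₁ + k₂ - 1).factorial : ℝ) / (((a + 1) + (b + 1) - 1).factorial : ℝ)) *
              (stirling1 (a + 1) l₁ : ℝ) * (stirling2 l₁ k₁ : ℝ) *
              (stirling1 (b + 1) l₂ : ℝ) * (stirling2 l₂ k₂ : ℝ) *
              ν ^ (l₁ + l₂ - 1) * β₁ ^ k₁ * β₂ ^ k₂ := rfl
  rw [hunf, GG_Icc]
  rw [Finset.mul_sum]
  apply Finset.sum_congr rfl; intro l₁ hl₁
  rw [Finset.mul_sum]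
  apply Finset.sum_congr rfl; intro k₁ hk₁
  rw [Finset.mul_sum]
  apply Finset.sum_congr rfl; intro l₂ hl₂
  rw [Finset.mul_sum]
  apply Finset.sum_congr rfl; intro k₂ hk₂
  simp only [Finset.mem_Icc] at hl₁ hk₁ hl₂ hk₂
  have hcond : ¬(k₁ = 0 ∧ k₂ = 0) := by omega
  have hLam : Lam β₁ β₂ k₁ k₂
      = (-1:ℝ)^(k₁+k₂-1) * (((k₁+k₂-1).factorial : ℕ) : ℝ) * β₁^k₁ * β₂^k₂ := by
    unfold Lam; rw [if_neg hcond]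
  rw [hLam]
  have e : (a+1)+(b+1)-1 = a+b+1 := by omega
  rw [e]
  have h1 : ν * ν ^ (l₁+l₂-1) = ν ^ l₁ * ν ^ l₂ := by
    rw [← pow_succ' ν (l₁+l₂-1), show l₁+l₂-1+1 = l₁+l₂ from by omega, pow_add]
  have hfct : (((a+b+1).factorial : ℕ) : ℝ) ≠ 0 := by
    exact_mod_cast Nat.factorial_ne_zero (a+b+1)
  have hF : (((a+b+1).factorial : ℕ) : ℝ) * (((a+b+1).factorial : ℕ) : ℝ)⁻¹ = 1 :=
    mul_inv_cancel₀ hfct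
  rw [div_eq_mul_inv]
  linear_combination
    (-((-1:ℝ)^(k₁+k₂-1) * ((k₁+k₂-1).factorial : ℝ) * β₁^k₁ * β₂^k₂
      * (stirling1 (a+1) l₁ : ℝ) * (stirling2 l₁ k₁ : ℝ) * (stirling1 (b+1) l₂ : ℝ)
      * (stirling2 l₂ k₂ : ℝ))) * h1
    + (-((-1:ℝ)^(k₁+k₂-1) * ((k₁+k₂-1).factorial : ℝ) * β₁^k₁ * β₂^k₂
      * (stirling1 (a+1) l₁ : ℝ) * (stirling2 l₁ k₁ : ℝ) * (stirling1 (b+1) l₂ : ℝ)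
      * (stirling2 l₂ k₂ : ℝ) * ν * ν ^ (l₁+l₂-1))) * hF

lemma GG_Icc10 (ν β₁ β₂ : ℝ) (a : ℕ) :
    GG ν β₁ β₂ (a+1) 0
      = ∑ l ∈ Finset.Icc 1 (a+1), ∑ k ∈ Finset.Icc 1 l,
          ((stirling1 (a+1) l : ℝ) * (stirling2 l k : ℝ) * ν ^ l) * Lam β₁ β₂ k 0 := by
  rw [GG_box]
  have hin : ∀ k₁, (∑ l₂ ∈ Finset.range (0+1), ∑ k₂ ∈ Finset.range (0+1),
      ((stirling1 0 l₂ : ℝ) * (stirling2 l₂ k₂ : ℝ) * ν ^ l₂) * Lam β₁ β₂ k₁ k₂)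
      = Lam β₁ β₂ k₁ 0 := by
    intro k₁
    simp [stirling1, stirling2]
  have hsum : ∀ l₁ ∈ Finset.range (a+2), ∀ k₁ ∈ Finset.range (a+2),
      ((stirling1 (a+1) l₁ : ℝ) * (stirling2 l₁ k₁ : ℝ) * ν ^ l₁)
        * (∑ l₂ ∈ Finset.range (0+1), ∑ k₂ ∈ Finset.range (0+1),
            ((stirling1 0 l₂ : ℝ) * (stirling2 l₂ k₂ : ℝ) * ν ^ l₂) * Lam β₁ β₂ k₁ k₂)
      = ((stirling1 (a+1) l₁ : ℝ) * (stirling2 l₁ k₁ : ℝ) * ν ^ l₁) * Lam β₁ β₂ k₁ 0 := by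
    intro l₁ _ k₁ _
    rw [hin]
  symm
  have e1 := sum_Icc_ext (a+1) (fun l k =>
      ((stirling1 (a+1) l : ℝ) * (stirling2 l k : ℝ) * ν ^ l) * Lam β₁ β₂ k 0)
    (by intro k; simp [stirling1_zero_right])
    (by intro l hl; simp [Lam])
    (by intro l k _ hlt; simp [stirling2_eq_zero hlt])
  refine Eq.trans e1 ?_
  apply Finset.sum_congr rfl; intro l₁ h₁
  apply Finset.sum_congr rfl; intro k₁ h₂
  exact (hsum l₁ h₁ k₁ h₂).symm

lemma GG_eq_F10 (ν β₁ β₂ : ℝ) (a : ℕ) :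
    GG ν β₁ β₂ (a+1) 0 = ν * ((a.factorial : ℕ) : ℝ) * besselF ν β₁ β₂ (a+1) 0 := by
  have hunf : besselF ν β₁ β₂ (a+1) 0
      = ∑ l ∈ Finset.Icc 1 (a + 1), ∑ k ∈ Finset.Icc 1 l,
          (-1 : ℝ) ^ (k - 1) * (((k - 1).factorial : ℝ) / (((a + 1) - 1).factorial : ℝ)) *
            (stirling1 (a + 1) l : ℝ) * (stirling2 l k : ℝ) * ν ^ (l - 1) * β₁ ^ k := rfl
  rw [hunf, GG_Icc10]
  rw [Finset.mul_sum]
  apply Finset.sum_congr rfl; intro l hl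
  rw [Finset.mul_sum]
  apply Finset.sum_congr rfl; intro k hk
  simp only [Finset.mem_Icc] at hl hk
  have hcond : ¬(k = 0 ∧ (0:ℕ) = 0) := by omega
  have e2 : k+0-1 = k-1 := by omega
  have hLam : Lam β₁ β₂ k 0
      = (-1:ℝ)^(k-1) * (((k-1).factorial : ℕ) : ℝ) * β₁^k * β₂^(0:ℕ) := by
    unfold Lam; rw [if_neg hcond, e2]
  rw [hLam]
  have e : (a+1)-1 = a := by omega
  rw [e]
  have h1 : ν * ν ^ (l-1) = ν ^ l := by
    rw [← pow_succ' ν (l-1), show l-1+1 = l from by omega]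
  have hfct : ((a.factorial : ℕ) : ℝ) ≠ 0 := by
    exact_mod_cast Nat.factorial_ne_zero a
  have hF : ((a.factorial : ℕ) : ℝ) * ((a.factorial : ℕ) : ℝ)⁻¹ = 1 :=
    mul_inv_cancel₀ hfct
  rw [div_eq_mul_inv]
  linear_combination
    (-((-1:ℝ)^(k-1) * ((k-1).factorial : ℝ) * β₁^k * β₂^(0:ℕ)
      * (stirling1 (a+1) l : ℝ) * (stirling2 l k : ℝ))) * h1
    + (-((-1:ℝ)^(k-1) * ((k-1).factorial : ℝ) * β₁^k * β₂^(0:ℕ)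
      * (stirling1 (a+1) l : ℝ) * (stirling2 l k : ℝ) * ν * ν ^ (l-1))) * hF

lemma GG_eq_F01 (ν β₁ β₂ : ℝ) (b : ℕ) :
    GG ν β₁ β₂ 0 (b+1) = ν * ((b.factorial : ℕ) : ℝ) * besselF ν β₁ β₂ 0 (b+1) := by
  rw [GG_symm]
  have h : besselF ν β₂ β₁ (b+1) 0 = besselF ν β₁ β₂ 0 (b+1) := rfl
  rw [GG_eq_F10, h]

lemma GG_eq_F (ν β₁ β₂ : ℝ) (m n : ℕ) (h : 1 ≤ m + n) :
    GG ν β₁ β₂ m n = ν * (((m+n-1).factorial : ℕ) : ℝ) * besselF ν β₁ β₂ m n := by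
  match m, n with
  | 0, 0 => omega
  | m+1, 0 =>
    have e : m+1+0-1 = m := by omega
    rw [e]; exact GG_eq_F10 ν β₁ β₂ m
  | 0, n+1 =>
    have e : 0+(n+1)-1 = n := by omega
    rw [e]; exact GG_eq_F01 ν β₁ β₂ n
  | m+1, n+1 =>
    have e : (m+1)+(n+1)-1 = m+n+1 := by omega
    rw [e]; exact GG_eq_F11 ν β₁ β₂ m n

/-- The self-similar recursion (Theorem 3, eq. (11)) holds for the explicit
Bessel spider joint moment formulas: for `a, b ≥ 1`,
`F(a,b) = ∑_{k=1}^{a} (C(a,k)/C(a+b,k)) D_k(β₁) F(a-k,b)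
        + ∑_{k=1}^{b} (C(b,k)/C(a+b,k)) D_k(β₂) F(a,b-k)`. -/
theorem besselF_self_similar_recursion (ν β₁ β₂ : ℝ) (a b : ℕ)
    (ha : 1 ≤ a) (hb : 1 ≤ b) :
    besselF ν β₁ β₂ a b
      = (∑ k ∈ Finset.Icc 1 a,
            ((a.choose k : ℝ) / ((a + b).choose k : ℝ)) * besselD ν k β₁ *
              besselF ν β₁ β₂ (a - k) b)
        + ∑ k ∈ Finset.Icc 1 b,
            ((b.choose k : ℝ) / ((a + b).choose k : ℝ)) * besselD ν k β₂ *
              besselF ν β₁ β₂ a (b - k) := by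
  obtain ⟨a', rfl⟩ : ∃ a', a = a'+1 := ⟨a-1, by omega⟩
  obtain ⟨b', rfl⟩ : ∃ b', b = b'+1 := ⟨b-1, by omega⟩
  by_cases hν : ν = 0
  · subst hν
    have hL : besselF 0 β₁ β₂ (a'+1) (b'+1) = 0 := by
      have hunf : besselF (0:ℝ) β₁ β₂ (a'+1) (b'+1)
          = ∑ l₁ ∈ Finset.Icc 1 (a' + 1), ∑ k₁ ∈ Finset.Icc 1 l₁,
              ∑ l₂ ∈ Finset.Icc 1 (b' + 1), ∑ k₂ ∈ Finset.Icc 1 l₂,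
                (-1 : ℝ) ^ (k₁ + k₂ - 1) *
                  (((k₁ + k₂ - 1).factorial : ℝ) / (((a' + 1) + (b' + 1) - 1).factorial : ℝ)) *
                  (stirling1 (a' + 1) l₁ : ℝ) * (stirling2 l₁ k₁ : ℝ) *
                  (stirling1 (b' + 1) l₂ : ℝ) * (stirling2 l₂ k₂ : ℝ) *
                  (0:ℝ) ^ (l₁ + l₂ - 1) * β₁ ^ k₁ * β₂ ^ k₂ := rfl
      rw [hunf]
      apply Finset.sum_eq_zero; intro l₁ h₁
      apply Finset.sum_eq_zero; intro k₁ _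
      apply Finset.sum_eq_zero; intro l₂ h₂
      apply Finset.sum_eq_zero; intro k₂ _
      simp only [Finset.mem_Icc] at h₁ h₂
      rw [zero_pow (show l₁ + l₂ - 1 ≠ 0 by omega)]
      ring
    have hD : ∀ β : ℝ, ∀ k : ℕ, 1 ≤ k → besselD 0 k β = 0 := by
      intro β k hk
      unfold besselD
      rw [Finset.sum_eq_zero]
      · ring
      · intro j hj
        simp only [Finset.mem_Icc] at hj
        rw [zero_pow (show j ≠ 0 by omega)]
        ring
    rw [hL]
    rw [Finset.sum_eq_zero, Finset.sum_eq_zero]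
    · norm_num
    · intro k hk
      simp only [Finset.mem_Icc] at hk
      rw [hD β₂ k hk.1]
      ring
    · intro k hk
      simp only [Finset.mem_Icc] at hk
      rw [hD β₁ k hk.1]
      ring
  · -- main case
    have hfactne : (((a'+1+(b'+1)).factorial : ℕ) : ℝ) ≠ 0 := by
      exact_mod_cast Nat.factorial_ne_zero _
    apply mul_left_cancel₀ (mul_ne_zero hν hfactne)
    have hGab := GG_eq_F11 ν β₁ β₂ a' b'
    have RA := RR ν β₁ β₂ a' b'
    have RB := RR ν β₂ β₁ b' a'
    simp only [GG_symm ν β₂ β₁] at RB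
    -- LHS
    have hLHS : ν * (((a'+1+(b'+1)).factorial : ℕ) : ℝ) * besselF ν β₁ β₂ (a'+1) (b'+1)
        = (((a'+1+(b'+1)) : ℕ) : ℝ) * GG ν β₁ β₂ (a'+1) (b'+1) := by
      rw [hGab, show a'+1+(b'+1) = (a'+b'+1)+1 from by omega, Nat.factorial_succ]
      push_cast
      ring
    -- term lemmas
    have hterm1 : ∀ k ∈ Finset.Icc 1 (a'+1),
        ν * (((a'+1+(b'+1)).factorial : ℕ) : ℝ)
          * (((a'+1).choose k : ℝ) / (((a'+1+(b'+1)).choose k : ℕ) : ℝ) * besselD ν k β₁ *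
              besselF ν β₁ β₂ (a'+1-k) (b'+1))
        = (-β₁) * (((((a'+1+(b'+1)) : ℕ) : ℝ) - (k:ℝ))
            * (((a'+1).choose k : ℝ) * rho ν k * GG ν β₁ β₂ (a'+1-k) (b'+1))) := by
      intro k hk
      simp only [Finset.mem_Icc] at hk
      have hD : besselD ν k β₁ = -(β₁ / (k.factorial : ℝ)) * rho ν k := by
        unfold besselD
        rw [rho_eq_sum_Icc ν k hk.1]
      have hGF := GG_eq_F ν β₁ β₂ (a'+1-k) (b'+1) (by omega)
      have hA1 : (a'+1-k)+(b'+1)-1 = (a'+1+(b'+1))-k-1 := by omega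
      rw [hA1] at hGF
      have h1 : ((a'+1+(b'+1)).choose k) * k.factorial * ((a'+1+(b'+1))-k).factorial
          = (a'+1+(b'+1)).factorial :=
        Nat.choose_mul_factorial_mul_factorial (by omega)
      have key : (((a'+1+(b'+1)).factorial : ℕ) : ℝ)
          = (((a'+1+(b'+1)).choose k : ℕ) : ℝ) * ((k.factorial : ℕ) : ℝ)
            * (((((a'+1+(b'+1)) : ℕ) : ℝ) - (k:ℝ))
                * ((((a'+1+(b'+1))-k-1).factorial : ℕ) : ℝ)) := by
        have h3 : ((a'+1+(b'+1))-k).factorial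
            = ((a'+1+(b'+1))-k) * ((a'+1+(b'+1))-k-1).factorial := by
          conv_lhs => rw [show (a'+1+(b'+1))-k = ((a'+1+(b'+1))-k-1)+1 from by omega]
          rw [Nat.factorial_succ]
          congr 1
          omega
        rw [← h1, h3]
        have hc : (((a'+1+(b'+1))-k : ℕ) : ℝ) = (((a'+1+(b'+1)) : ℕ) : ℝ) - (k:ℝ) :=
          Nat.cast_sub (by omega)
        push_cast at hc ⊢
        rw [hc]
        try ring
      have hCne : (((a'+1+(b'+1)).choose k : ℕ) : ℝ) ≠ 0 := by
        have := Nat.choose_pos (show k ≤ a'+1+(b'+1) by omega)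
        exact_mod_cast this.ne'
      have hkne : ((k.factorial : ℕ) : ℝ) ≠ 0 := by
        exact_mod_cast Nat.factorial_ne_zero k
      rw [hD, hGF, key]
      field_simp
      try ring
    have hterm2 : ∀ k ∈ Finset.Icc 1 (b'+1),
        ν * (((a'+1+(b'+1)).factorial : ℕ) : ℝ)
          * (((b'+1).choose k : ℝ) / (((a'+1+(b'+1)).choose k : ℕ) : ℝ) * besselD ν k β₂ *
              besselF ν β₁ β₂ (a'+1) (b'+1-k))
        = (-β₂) * (((((a'+1+(b'+1)) : ℕ) : ℝ) - (k:ℝ))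
            * (((b'+1).choose k : ℝ) * rho ν k * GG ν β₁ β₂ (a'+1) (b'+1-k))) := by
      intro k hk
      simp only [Finset.mem_Icc] at hk
      have hD : besselD ν k β₂ = -(β₂ / (k.factorial : ℝ)) * rho ν k := by
        unfold besselD
        rw [rho_eq_sum_Icc ν k hk.1]
      have hGF := GG_eq_F ν β₁ β₂ (a'+1) (b'+1-k) (by omega)
      have hA1 : (a'+1)+(b'+1-k)-1 = (a'+1+(b'+1))-k-1 := by omega
      rw [hA1] at hGF
      have h1 : ((a'+1+(b'+1)).choose k) * k.factorial * ((a'+1+(b'+1))-k).factorial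
          = (a'+1+(b'+1)).factorial :=
        Nat.choose_mul_factorial_mul_factorial (by omega)
      have key : (((a'+1+(b'+1)).factorial : ℕ) : ℝ)
          = (((a'+1+(b'+1)).choose k : ℕ) : ℝ) * ((k.factorial : ℕ) : ℝ)
            * (((((a'+1+(b'+1)) : ℕ) : ℝ) - (k:ℝ))
                * ((((a'+1+(b'+1))-k-1).factorial : ℕ) : ℝ)) := by
        have h3 : ((a'+1+(b'+1))-k).factorial
            = ((a'+1+(b'+1))-k) * ((a'+1+(b'+1))-k-1).factorial := by
          conv_lhs => rw [show (a'+1+(b'+1))-k = ((a'+1+(b'+1))-k-1)+1 from by omega]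
          rw [Nat.factorial_succ]
          congr 1
          omega
        rw [← h1, h3]
        have hc : (((a'+1+(b'+1))-k : ℕ) : ℝ) = (((a'+1+(b'+1)) : ℕ) : ℝ) - (k:ℝ) :=
          Nat.cast_sub (by omega)
        push_cast at hc ⊢
        rw [hc]
        try ring
      have hCne : (((a'+1+(b'+1)).choose k : ℕ) : ℝ) ≠ 0 := by
        have := Nat.choose_pos (show k ≤ a'+1+(b'+1) by omega)
        exact_mod_cast this.ne'
      have hkne : ((k.factorial : ℕ) : ℝ) ≠ 0 := by
        exact_mod_cast Nat.factorial_ne_zero k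
      rw [hD, hGF, key]
      field_simp
      try ring
    -- splits
    have hsplitA : ∑ k ∈ Finset.Icc 1 (a'+1),
          (((((a'+1+(b'+1)) : ℕ) : ℝ) - (k:ℝ))
            * (((a'+1).choose k : ℝ) * rho ν k * GG ν β₁ β₂ (a'+1-k) (b'+1)))
        = (((a'+1 : ℕ)) : ℝ) * (∑ k ∈ Finset.Icc 1 a',
              (a'.choose k : ℝ) * rho ν k * GG ν β₁ β₂ (a'+1-k) (b'+1))
          + (((b'+1 : ℕ)) : ℝ) * (∑ k ∈ Finset.Icc 1 (a'+1),
              ((a'+1).choose k : ℝ) * rho ν k * GG ν β₁ β₂ (a'+1-k) (b'+1)) := by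
      have hext : (((a'+1 : ℕ)) : ℝ) * (∑ k ∈ Finset.Icc 1 a',
            (a'.choose k : ℝ) * rho ν k * GG ν β₁ β₂ (a'+1-k) (b'+1))
          = ∑ k ∈ Finset.Icc 1 (a'+1),
              (((a'+1 : ℕ)) : ℝ) * ((a'.choose k : ℝ) * rho ν k * GG ν β₁ β₂ (a'+1-k) (b'+1)) := by
        rw [Finset.sum_Icc_succ_top (by omega : 1 ≤ a'+1), Nat.choose_succ_self]
        push_cast
        rw [Finset.mul_sum]
        ring
      rw [hext, Finset.mul_sum, ← Finset.sum_add_distrib]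
      apply Finset.sum_congr rfl
      intro k hk
      simp only [Finset.mem_Icc] at hk
      have hch : (a'+1) * (a'.choose k) = ((a'+1).choose k) * ((a'+1) - k) := by
        rw [Nat.add_one_mul_choose_eq a' k, Nat.choose_succ_right_eq (a'+1) k]
      have hchR : (((a'+1 : ℕ)) : ℝ) * ((a'.choose k : ℕ) : ℝ)
          = (((a'+1).choose k : ℕ) : ℝ) * ((((a'+1) : ℕ) : ℝ) - (k:ℝ)) := by
        have hc : (((a'+1)-k : ℕ) : ℝ) = (((a'+1) : ℕ) : ℝ) - (k:ℝ) := Nat.cast_sub (by omega)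
        rw [← hc]
        exact_mod_cast congrArg (Nat.cast : ℕ → ℝ) hch
      push_cast at hchR ⊢
      linear_combination (-(rho ν k * GG ν β₁ β₂ (a'+1-k) (b'+1))) * hchR
    have hsplitB : ∑ k ∈ Finset.Icc 1 (b'+1),
          (((((a'+1+(b'+1)) : ℕ) : ℝ) - (k:ℝ))
            * (((b'+1).choose k : ℝ) * rho ν k * GG ν β₁ β₂ (a'+1) (b'+1-k)))
        = (((b'+1 : ℕ)) : ℝ) * (∑ k ∈ Finset.Icc 1 b',
              (b'.choose k : ℝ) * rho ν k * GG ν β₁ β₂ (a'+1) (b'+1-k))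
          + (((a'+1 : ℕ)) : ℝ) * (∑ k ∈ Finset.Icc 1 (b'+1),
              ((b'+1).choose k : ℝ) * rho ν k * GG ν β₁ β₂ (a'+1) (b'+1-k)) := by
      have hext : (((b'+1 : ℕ)) : ℝ) * (∑ k ∈ Finset.Icc 1 b',
            (b'.choose k : ℝ) * rho ν k * GG ν β₁ β₂ (a'+1) (b'+1-k))
          = ∑ k ∈ Finset.Icc 1 (b'+1),
              (((b'+1 : ℕ)) : ℝ) * ((b'.choose k : ℝ) * rho ν k * GG ν β₁ β₂ (a'+1) (b'+1-k)) := by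
        rw [Finset.sum_Icc_succ_top (by omega : 1 ≤ b'+1), Nat.choose_succ_self]
        push_cast
        rw [Finset.mul_sum]
        ring
      rw [hext, Finset.mul_sum, ← Finset.sum_add_distrib]
      apply Finset.sum_congr rfl
      intro k hk
      simp only [Finset.mem_Icc] at hk
      have hch : (b'+1) * (b'.choose k) = ((b'+1).choose k) * ((b'+1) - k) := by
        rw [Nat.add_one_mul_choose_eq b' k, Nat.choose_succ_right_eq (b'+1) k]
      have hchR : (((b'+1 : ℕ)) : ℝ) * ((b'.choose k : ℕ) : ℝ)
          = (((b'+1).choose k : ℕ) : ℝ) * ((((b'+1) : ℕ) : ℝ) - (k:ℝ)) := by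
        have hc : (((b'+1)-k : ℕ) : ℝ) = (((b'+1) : ℕ) : ℝ) - (k:ℝ) := Nat.cast_sub (by omega)
        rw [← hc]
        exact_mod_cast congrArg (Nat.cast : ℕ → ℝ) hch
      push_cast at hchR ⊢
      linear_combination (-(rho ν k * GG ν β₁ β₂ (a'+1) (b'+1-k))) * hchR
    -- assemble
    rw [mul_add, Finset.mul_sum, Finset.mul_sum,
      Finset.sum_congr rfl hterm1, Finset.sum_congr rfl hterm2,
      ← Finset.mul_sum, ← Finset.mul_sum, hsplitA, hsplitB, hLHS]
    push_cast at RA RB ⊢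
    linear_combination ((a':ℝ)+1) * RA + ((b':ℝ)+1) * RB
end
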